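/- Let Σ be a finite-dimensional simplicial complex such that Lk_Σ σ is connected for every face σ ∈ Σ (including σ = ∅) with dim Lk_Σ σ ≥ 1. Then Σ is pure and strongly connected. -/
import Mathlib


/-- An abstract simplicial complex on vertex type `V`: a collection of finite
subsets of `V` closed under taking subsets. -/
structure SComplex (V : Type*) [DecidableEq V] where
  faces : Set (Finset V)
  down_closed : ∀ s ∈ faces, ∀ t ⊆ s, t ∈ faces

namespace SComplex

variable {V : Type*} [DecidableEq V]

/-- The join `Σ₁ * Σ₂ := {σ₁ ∪ σ₂ | σᵢ ∈ Σᵢ}`. -/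
def join (K L : SComplex V) : SComplex V where
  faces := {u | ∃ s ∈ K.faces, ∃ t ∈ L.faces, u = s ∪ t}
  down_closed := by
    rintro u ⟨s, hs, t, ht, rfl⟩ v hv
    refine ⟨v ∩ s, K.down_closed s hs _ Finset.inter_subset_right,
      v ∩ t, L.down_closed t ht _ Finset.inter_subset_right, ?_⟩
    rw [← Finset.inter_union_distrib_left]
    exact (Finset.inter_eq_left.2 hv).symm

/-- The link `Lk_Σ σ := {τ ∈ Σ | σ ∩ τ = ∅ ∧ σ ∪ τ ∈ Σ}`. -/
def link (K : SComplex V) (σ : Finset V) : SComplex V where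
  faces := {τ | τ ∈ K.faces ∧ σ ∩ τ = ∅ ∧ σ ∪ τ ∈ K.faces}
  down_closed := by
    rintro τ ⟨hτ, hd, hu⟩ τ' hτ'
    exact ⟨K.down_closed τ hτ τ' hτ',
      Finset.subset_empty.1 (hd ▸ Finset.inter_subset_inter (subset_refl σ) hτ'),
      K.down_closed _ hu _ (Finset.union_subset_union_right hτ')⟩

/-- The contrastar `cost_Σ σ := {τ ∈ Σ | ¬ σ ⊆ τ}`. -/
def cost (K : SComplex V) (σ : Finset V) : SComplex V where
  faces := {τ | τ ∈ K.faces ∧ ¬ σ ⊆ τ}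
  down_closed := by
    rintro τ ⟨hτ, hn⟩ τ' hτ'
    exact ⟨K.down_closed τ hτ τ' hτ', fun h => hn (h.trans hτ')⟩

/-- The closed star `st̄_Σ σ := {τ ∈ Σ | σ ∪ τ ∈ Σ}`. -/
def closedStar (K : SComplex V) (σ : Finset V) : SComplex V where
  faces := {τ | τ ∈ K.faces ∧ σ ∪ τ ∈ K.faces}
  down_closed := by
    rintro τ ⟨hτ, hu⟩ τ' hτ'
    exact ⟨K.down_closed τ hτ τ' hτ',
      K.down_closed _ hu _ (Finset.union_subset_union_right hτ')⟩

/-- The full complex `σ̄` of all subsets of a simplex `σ`. -/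
def closure (σ : Finset V) : SComplex V where
  faces := {ρ | ρ ⊆ σ}
  down_closed := fun _ hs _ hts => hts.trans hs

/-- The boundary complex `∂σ` of all proper subsets of `σ`. -/
def simplexBoundary (σ : Finset V) : SComplex V where
  faces := {ρ | ρ ⊂ σ}
  down_closed := fun _ hs _ hts => lt_of_le_of_lt hts hs

/-- The set of vertices of a complex. -/
def vertexSet (K : SComplex V) : Set V := {v | {v} ∈ K.faces}

end SComplex

namespace SComplex

variable {V : Type*} [DecidableEq V]

/-- The dimension of a complex (`-1` for `{∅}`). -/
noncomputable def dim (K : SComplex V) : ℤ :=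
  sSup ((fun s : Finset V => (s.card : ℤ) - 1) '' K.faces)

/-- Finite-dimensionality. -/
def FiniteDim (K : SComplex V) : Prop :=
  BddAbove ((fun s : Finset V => (s.card : ℤ) - 1) '' K.faces)

/-- `s` is a maximal face of `K`. -/
def IsMaxFace (K : SComplex V) (s : Finset V) : Prop :=
  s ∈ K.faces ∧ ∀ t ∈ K.faces, s ⊆ t → s = t

/-- A complex is pure if all its maximal faces have dimension `dim K`. -/
def Pure (K : SComplex V) : Prop :=
  ∀ s : Finset V, K.IsMaxFace s → (s.card : ℤ) - 1 = K.dim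

/-- Two maximal faces are strongly connected if they are joined by a chain of
maximal faces, consecutive ones meeting in a face with one vertex less than the
largest face in the chain. -/
def StronglyConnectedPair (K : SComplex V) (σ τ : Finset V) : Prop :=
  ∃ (q : ℕ) (δ : Fin (q + 1) → Finset V),
    (∀ i, K.IsMaxFace (δ i)) ∧ δ 0 = σ ∧ δ (Fin.last q) = τ ∧
    ∀ i : Fin q,
      ((δ i.castSucc) ∩ (δ i.succ)).card + 1 = Finset.univ.sup fun j => (δ j).card

/-- A complex is strongly connected if every pair of maximal faces is. -/
def StronglyConnected (K : SComplex V) : Prop :=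
  ∀ σ τ : Finset V, K.IsMaxFace σ → K.IsMaxFace τ → K.StronglyConnectedPair σ τ

/-- Connectedness of a complex: its 1-skeleton is a connected graph. -/
def Connected (K : SComplex V) : Prop :=
  K.faces.Nonempty ∧ ∀ u v : V, {u} ∈ K.faces → {v} ∈ K.faces →
    Relation.ReflTransGen (fun a b : V => ({a, b} : Finset V) ∈ K.faces) u v

/-- The `p`-skeleton of a complex. -/
def skel (K : SComplex V) (p : ℤ) : SComplex V where
  faces := {s | s ∈ K.faces ∧ (s.card : ℤ) ≤ p + 1}
  down_closed := by
    rintro s ⟨hs, hc⟩ t hts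
    exact ⟨K.down_closed s hs t hts, le_trans (by exact_mod_cast Finset.card_le_card hts) hc⟩

/-- `s` is a submaximal face: it has exactly one vertex less than some maximal
face containing it. -/
def IsSubmaxFace (K : SComplex V) (s : Finset V) : Prop :=
  s ∈ K.faces ∧ ∃ m : Finset V, K.IsMaxFace m ∧ s ⊆ m ∧ s.card + 1 = m.card

/-- `Γ` is a full subcomplex of `Δ`. -/
def IsFull (Γ Δ : SComplex V) : Prop :=
  Γ.faces ⊆ Δ.faces ∧ ∀ σ ∈ Δ.faces, (∀ v ∈ σ, v ∈ Γ.vertexSet) → σ ∈ Γ.faces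

end SComplex


namespace SComplexAux

open SComplex Finset

variable {V : Type*} [DecidableEq V]

lemma sext {K L : SComplex V} (h : K.faces = L.faces) : K = L := by
  cases K; cases L; simpa using h

lemma link_empty (K : SComplex V) : K.link ∅ = K := by
  apply sext
  ext τ
  simp [SComplex.link]

lemma link_link (K : SComplex V) (σ ρ : Finset V) (h1 : σ ∩ ρ = ∅)
    (h2 : σ ∪ ρ ∈ K.faces) : (K.link σ).link ρ = K.link (σ ∪ ρ) := by
  apply sext
  ext τ
  simp only [SComplex.link, Set.mem_setOf_eq]
  constructor
  · rintro ⟨⟨hτ, hστ, hστu⟩, hρτ, hρτu, hσρτ, hσρτu⟩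
    refine ⟨hτ, ?_, by rwa [Finset.union_assoc]⟩
    rw [Finset.union_inter_distrib_right, hστ, hρτ, Finset.union_empty]
  · rintro ⟨hτ, hd, hu⟩
    rw [Finset.union_inter_distrib_right] at hd
    have hστ : σ ∩ τ = ∅ := by
      rw [← Finset.subset_empty, ← hd]; exact Finset.subset_union_left
    have hρτ : ρ ∩ τ = ∅ := by
      rw [← Finset.subset_empty, ← hd]; exact Finset.subset_union_right
    rw [Finset.union_assoc] at hu
    refine ⟨⟨hτ, hστ, K.down_closed _ hu _ ?_⟩, hρτ, K.down_closed _ hu _ ?_, ?_, hu⟩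
    · exact Finset.union_subset Finset.subset_union_left
        (Finset.subset_union_right.trans Finset.subset_union_right)
    · exact Finset.subset_union_right
    · rw [Finset.inter_union_distrib_left, h1, hστ, Finset.union_empty]

/-- adjacency relation between maximal faces with common cardinality `M`,
meeting in `M - 1` vertices. -/
def Adj (K : SComplex V) (M : ℕ) (a b : Finset V) : Prop :=
  K.IsMaxFace a ∧ K.IsMaxFace b ∧ a.card = M ∧ b.card = M ∧ (a ∩ b).card + 1 = M

lemma adj_card {K : SComplex V} {a b : Finset V} (ha : K.IsMaxFace a)
    (hb : K.IsMaxFace b) {M : ℕ} (h : (a ∩ b).card + 1 = M)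
    (hbM : b.card ≤ M) (haM : a.card = M) : b.card = M := by
  rcases hbM.lt_or_eq with hlt | he
  · exfalso
    have h1 : M ≤ b.card + 1 := by
      rw [← h]; exact Nat.succ_le_succ (Finset.card_le_card Finset.inter_subset_right)
    have h2 : b.card + 1 = M := le_antisymm hlt h1
    have h3 : a ∩ b = b := Finset.eq_of_subset_of_card_le Finset.inter_subset_right
      (by omega)
    have h4 : b ⊆ a := by rw [← h3]; exact Finset.inter_subset_left
    have h5 : b = a := hb.2 a ha.1 h4
    rw [h5, haM] at h2; omega
  · exact he

lemma scp_analysis {K : SComplex V} {σ τ : Finset V}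
    (h : K.StronglyConnectedPair σ τ) :
    τ.card = σ.card ∧ Relation.ReflTransGen (Adj K σ.card) σ τ := by
  obtain ⟨q, δ, hmax, h0, hl, hstep⟩ := h
  set M := Finset.univ.sup fun j => (δ j).card with hM
  obtain ⟨j0, -, hj0⟩ := Finset.exists_mem_eq_sup Finset.univ
    (Finset.univ_nonempty) (fun j => (δ j).card)
  have hle : ∀ i, (δ i).card ≤ M := fun i => Finset.le_sup (f := fun j => (δ j).card) (Finset.mem_univ i)
  have hiff : ∀ i : Fin q, ((δ i.castSucc).card = M ↔ (δ i.succ).card = M) := by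
    intro i
    constructor
    · intro hc
      exact adj_card (hmax _) (hmax _) (hstep i) (hle _) hc
    · intro hc
      refine adj_card (hmax _) (hmax _) ?_ (hle _) hc
      rw [Finset.inter_comm]; exact hstep i
  have hall0 : ∀ i : Fin (q + 1), ((δ i).card = M ↔ (δ 0).card = M) := by
    intro i
    induction i using Fin.induction with
    | zero => rfl
    | succ i ih => exact (hiff i).symm.trans ih
  have h0M : (δ 0).card = M := (hall0 j0).1 hj0.symm
  have hall : ∀ i, (δ i).card = M := fun i => (hall0 i).2 h0M
  have hMσ : M = σ.card := by rw [← h0, ← h0M]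
  constructor
  · rw [← hl, ← h0, hall, hall]
  · have key : ∀ i : Fin (q + 1), Relation.ReflTransGen (Adj K σ.card) σ (δ i) := by
      intro i
      induction i using Fin.induction with
      | zero => rw [h0]
      | succ i ih =>
        refine ih.tail ⟨hmax _, hmax _, ?_, ?_, ?_⟩
        · rw [hall, hMσ]
        · rw [hall, hMσ]
        · rw [hstep i, hMσ]
    rw [← hl]; exact key _

lemma scp_refl {K : SComplex V} {σ : Finset V} (hσ : K.IsMaxFace σ) :
    K.StronglyConnectedPair σ σ :=
  ⟨0, fun _ => σ, fun _ => hσ, rfl, rfl, fun i => i.elim0⟩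

lemma rtg_good {K : SComplex V} {M : ℕ} {σ τ : Finset V}
    (hσ : K.IsMaxFace σ) (hσc : σ.card = M)
    (h : Relation.ReflTransGen (Adj K M) σ τ) :
    ∃ (q : ℕ) (δ : Fin (q + 1) → Finset V),
      (∀ i, K.IsMaxFace (δ i) ∧ (δ i).card = M) ∧ δ 0 = σ ∧ δ (Fin.last q) = τ ∧
      ∀ i : Fin q, ((δ i.castSucc) ∩ (δ i.succ)).card + 1 = M := by
  induction h with
  | refl => exact ⟨0, fun _ => σ, fun _ => ⟨hσ, hσc⟩, rfl, rfl, fun i => i.elim0⟩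
  | @tail b c hab hbc ih =>
    obtain ⟨q, δ, hmax, h0, hl, hstep⟩ := ih
    refine ⟨q + 1, Fin.snoc δ c, ?_, ?_, ?_, ?_⟩
    · intro i
      induction i using Fin.lastCases with
      | last => rw [Fin.snoc_last]; exact ⟨hbc.2.1, hbc.2.2.2.1⟩
      | cast j => rw [Fin.snoc_castSucc]; exact hmax j
    · rw [show (0 : Fin (q + 1 + 1)) = Fin.castSucc 0 from rfl, Fin.snoc_castSucc]
      exact h0
    · rw [Fin.snoc_last]
    · intro i
      induction i using Fin.lastCases with
      | last =>
        rw [Fin.succ_last, Fin.snoc_last, Fin.snoc_castSucc, hl]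
        exact hbc.2.2.2.2
      | cast j =>
        rw [Fin.succ_castSucc, Fin.snoc_castSucc, Fin.snoc_castSucc]
        exact hstep j

lemma rtg_scp {K : SComplex V} {M : ℕ} {σ τ : Finset V}
    (hσ : K.IsMaxFace σ) (hσc : σ.card = M)
    (h : Relation.ReflTransGen (Adj K M) σ τ) : K.StronglyConnectedPair σ τ := by
  obtain ⟨q, δ, hmax, h0, hl, hstep⟩ := rtg_good hσ hσc h
  have hsup : (Finset.univ.sup fun j => (δ j).card) = M := by
    apply le_antisymm
    · exact Finset.sup_le fun j _ => ((hmax j).2).le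
    · calc M = (δ 0).card := (hmax 0).2.symm
        _ ≤ _ := Finset.le_sup (f := fun j => (δ j).card) (Finset.mem_univ 0)
  exact ⟨q, δ, fun i => (hmax i).1, h0, hl, fun i => by rw [hstep i, hsup]⟩

lemma exists_maxface_aux {K : SComplex V} {n : ℕ}
    (hb : ∀ s ∈ K.faces, s.card ≤ n) :
    ∀ (k : ℕ) (s : Finset V), s ∈ K.faces → n ≤ s.card + k →
      ∃ m, K.IsMaxFace m ∧ s ⊆ m := by
  intro k
  induction k with
  | zero =>
    intro s hs hn
    exact ⟨s, ⟨hs, fun t ht hst =>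
      Finset.eq_of_subset_of_card_le hst ((hb t ht).trans (by simpa using hn))⟩,
      subset_rfl⟩
  | succ k ih =>
    intro s hs hn
    by_cases hmax : ∀ t ∈ K.faces, s ⊆ t → s = t
    · exact ⟨s, ⟨hs, hmax⟩, subset_rfl⟩
    · push_neg at hmax
      obtain ⟨t, ht, hst, hne⟩ := hmax
      have : s.card < t.card := Finset.card_lt_card (ssubset_of_ne_of_subset hne hst)
      obtain ⟨m, hm, htm⟩ := ih t ht (by omega)
      exact ⟨m, hm, hst.trans htm⟩

lemma exists_maxface {K : SComplex V} {n : ℕ}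
    (hb : ∀ s ∈ K.faces, s.card ≤ n) {s : Finset V} (hs : s ∈ K.faces) :
    ∃ m, K.IsMaxFace m ∧ s ⊆ m :=
  exists_maxface_aux hb n s hs (by omega)


lemma erase_maxface {K : SComplex V} {v : V} {m : Finset V}
    (hm : K.IsMaxFace m) (hv : v ∈ m) : (K.link {v}).IsMaxFace (m.erase v) := by
  have hmem : m.erase v ∈ (K.link {v}).faces := by
    refine ⟨K.down_closed m hm.1 _ (Finset.erase_subset v m), ?_, ?_⟩
    · exact Finset.singleton_inter_of_notMem (Finset.notMem_erase v m)
    · rw [← Finset.insert_eq, Finset.insert_erase hv]; exact hm.1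
  refine ⟨hmem, ?_⟩
  rintro ρ ⟨hρK, hd, hu⟩ hsub
  have hvρ : v ∉ ρ := by
    intro h
    have : v ∈ ({v} : Finset V) ∩ ρ := Finset.mem_inter.2 ⟨Finset.mem_singleton_self v, h⟩
    rw [hd] at this; exact absurd this (Finset.notMem_empty v)
  have hmins : m = insert v ρ := by
    apply hm.2
    · rwa [Finset.insert_eq]
    · calc m = insert v (m.erase v) := (Finset.insert_erase hv).symm
        _ ⊆ insert v ρ := Finset.insert_subset_insert v hsub
  rw [hmins, Finset.erase_insert hvρ]

lemma insert_maxface {K : SComplex V} {v : V} {d : Finset V}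
    (hd : (K.link {v}).IsMaxFace d) : K.IsMaxFace (insert v d) := by
  obtain ⟨⟨hdK, hdis, hdu⟩, hdmax⟩ := hd
  have hvd : v ∉ d := by
    intro h
    have : v ∈ ({v} : Finset V) ∩ d := Finset.mem_inter.2 ⟨Finset.mem_singleton_self v, h⟩
    rw [hdis] at this; exact absurd this (Finset.notMem_empty v)
  constructor
  · rwa [Finset.insert_eq]
  · intro t ht hsub
    have hvt : v ∈ t := hsub (Finset.mem_insert_self v d)
    have htL : t.erase v ∈ (K.link {v}).faces := by
      refine ⟨K.down_closed t ht _ (Finset.erase_subset v t), ?_, ?_⟩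
      · exact Finset.singleton_inter_of_notMem (Finset.notMem_erase v t)
      · rw [← Finset.insert_eq, Finset.insert_erase hvt]; exact ht
    have hdt : d ⊆ t.erase v :=
      Finset.subset_erase.2 ⟨(Finset.subset_insert v d).trans hsub, hvd⟩
    rw [hdmax (t.erase v) htL hdt, Finset.insert_erase hvt]

lemma main (n : ℕ) : ∀ (K : SComplex V),
    (∀ s ∈ K.faces, s.card ≤ n) →
    (∀ σ ∈ K.faces, 1 ≤ (K.link σ).dim → (K.link σ).Connected) →
    K.StronglyConnected := by
  induction n with
  | zero =>
    intro K hb _ σ τ hσ hτ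
    have hσ0 : σ = ∅ := Finset.card_eq_zero.1 (Nat.le_zero.1 (hb σ hσ.1))
    have hτ0 : τ = ∅ := Finset.card_eq_zero.1 (Nat.le_zero.1 (hb τ hτ.1))
    have hστ : σ = τ := by rw [hσ0, hτ0]
    exact hστ ▸ scp_refl hσ
  | succ n IH =>
    intro K hb hlk
    have adjacent : ∀ σ τ : Finset V, K.IsMaxFace σ → K.IsMaxFace τ →
        ∀ v, v ∈ σ → v ∈ τ → K.StronglyConnectedPair σ τ := by
      intro σ τ hσ hτ v hvσ hvτ
      set L := K.link {v} with hL
      have hvnot : ∀ s ∈ L.faces, v ∉ s := by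
        rintro s ⟨-, hd, -⟩ hv
        have : v ∈ ({v} : Finset V) ∩ s :=
          Finset.mem_inter.2 ⟨Finset.mem_singleton_self v, hv⟩
        rw [hd] at this; exact absurd this (Finset.notMem_empty v)
      have hLb : ∀ s ∈ L.faces, s.card ≤ n := by
        intro s hs
        obtain ⟨hsK, hd, hu⟩ := hs
        have h1 := hb _ hu
        rwa [← Finset.insert_eq,
          Finset.card_insert_of_notMem (hvnot s ⟨hsK, hd, hu⟩),
          Nat.succ_le_succ_iff] at h1
      have hLlk : ∀ ρ ∈ L.faces, 1 ≤ (L.link ρ).dim → (L.link ρ).Connected := by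
        intro ρ hρ
        obtain ⟨hρK, hd, hu⟩ := hρ
        show 1 ≤ ((K.link {v}).link ρ).dim → ((K.link {v}).link ρ).Connected
        rw [link_link K {v} ρ hd hu]
        exact hlk _ hu
      obtain ⟨q, δ, hmax, h0, hl, hstep⟩ := IH L hLb hLlk (σ.erase v) (τ.erase v)
        (erase_maxface hσ hvσ) (erase_maxface hτ hvτ)
      refine ⟨q, fun i => insert v (δ i), fun i => insert_maxface (hmax i), ?_, ?_, ?_⟩
      · show insert v (δ 0) = σ
        rw [h0, Finset.insert_erase hvσ]
      · show insert v (δ (Fin.last q)) = τ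
        rw [hl, Finset.insert_erase hvτ]
      · have hvi : ∀ i, v ∉ δ i := fun i => hvnot _ ((hmax i).1)
        have hcard : ∀ i, (insert v (δ i)).card = (δ i).card + 1 :=
          fun i => Finset.card_insert_of_notMem (hvi i)
        obtain ⟨j0, -, hj0⟩ := Finset.exists_mem_eq_sup Finset.univ
          Finset.univ_nonempty (fun j => (δ j).card)
        set M := Finset.univ.sup fun j => (δ j).card with hM
        have hsup : (Finset.univ.sup fun j => (insert v (δ j)).card) = M + 1 := by
          apply le_antisymm
          · refine Finset.sup_le fun j _ => ?_
            rw [hcard j]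
            exact Nat.succ_le_succ
              (Finset.le_sup (f := fun j => (δ j).card) (Finset.mem_univ j))
          · calc M + 1 = (insert v (δ j0)).card := by rw [hcard j0, ← hj0]
              _ ≤ _ := Finset.le_sup (f := fun j => (insert v (δ j)).card)
                  (Finset.mem_univ j0)
        intro i
        rw [hsup]
        have hii : insert v (δ i.castSucc) ∩ insert v (δ i.succ)
            = insert v (δ i.castSucc ∩ δ i.succ) := by
          ext x
          simp only [Finset.mem_inter, Finset.mem_insert]
          tauto
        rw [hii, Finset.card_insert_of_notMem
          (fun h => hvi i.castSucc (Finset.mem_inter.1 h).1)]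
        have := hstep i
        omega
    intro σ τ hσ hτ
    rcases Finset.eq_empty_or_nonempty σ with hσe | hσne
    · have hστ : σ = τ := hσ.2 τ hτ.1 (hσe ▸ Finset.empty_subset τ)
      exact hστ ▸ scp_refl hσ
    rcases Finset.eq_empty_or_nonempty τ with hτe | hτne
    · have hστ : σ = τ := (hτ.2 σ hσ.1 (hτe ▸ Finset.empty_subset σ)).symm
      exact hστ ▸ scp_refl hσ
    rcases (σ ∩ τ).eq_empty_or_nonempty with hint | hint
    swap
    · obtain ⟨v, hv⟩ := hint
      rw [Finset.mem_inter] at hv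
      exact adjacent σ τ hσ hτ v hv.1 hv.2
    by_cases hbig : ∃ g ∈ K.faces, 2 ≤ g.card
    · obtain ⟨g, hg, hg2⟩ := hbig
      have hone : ∀ {x : V} {s : Finset V}, x ∈ s → s ∈ K.faces →
          ({x} : Finset V) ∈ K.faces :=
        fun hx hs => K.down_closed _ hs _ (Finset.singleton_subset_iff.2 hx)
      have hbdd : BddAbove ((fun s : Finset V => (s.card : ℤ) - 1) '' K.faces) := by
        refine ⟨n + 1, ?_⟩
        rintro x ⟨s, hs, rfl⟩
        have := hb s hs
        push_cast
        omega
      have hdim : 1 ≤ K.dim := by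
        have h1 : (1 : ℤ) ≤ (g.card : ℤ) - 1 := by
          have := hg2; push_cast; omega
        exact h1.trans (le_csSup hbdd ⟨g, hg, rfl⟩)
      have hconn : K.Connected := by
        have hemp : ∅ ∈ K.faces := K.down_closed σ hσ.1 ∅ (Finset.empty_subset σ)
        have h2 := hlk ∅ hemp (by rw [link_empty]; exact hdim)
        rwa [link_empty] at h2
      obtain ⟨u, hu⟩ := hσne
      obtain ⟨w, hw⟩ := hτne
      have hpath := hconn.2 u w (hone hu hσ.1) (hone hw hτ.1)
      have key : ∀ w', Relation.ReflTransGen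
            (fun a b => ({a, b} : Finset V) ∈ K.faces) u w' →
          ∀ B, K.IsMaxFace B → w' ∈ B →
          B.card = σ.card ∧ Relation.ReflTransGen (Adj K σ.card) σ B := by
        intro w' hp
        induction hp with
        | refl =>
          intro B hB huB
          exact scp_analysis (adjacent σ B hσ hB u hu huB)
        | @tail b c hub hbc ihp =>
          intro B hB hcB
          obtain ⟨μ, hμ, hsubμ⟩ := exists_maxface hb hbc
          have hbμ : b ∈ μ := hsubμ (Finset.mem_insert_self b {c})
          have hcμ : c ∈ μ := hsubμ (by simp)
          obtain ⟨hμcard, hμrtg⟩ := ihp μ hμ hbμ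
          have h2 := scp_analysis (adjacent μ B hμ hB c hcμ hcB)
          rw [hμcard] at h2
          exact ⟨h2.1, hμrtg.trans h2.2⟩
      obtain ⟨-, hrtg⟩ := key w hpath τ hτ hw
      exact rtg_scp hσ rfl hrtg
    · push_neg at hbig
      have hσ1 : σ.card = 1 := le_antisymm (by have := hbig σ hσ.1; omega) hσne.card_pos
      have hτ1 : τ.card = 1 := le_antisymm (by have := hbig τ hτ.1; omega) hτne.card_pos
      refine ⟨1, fun i => if i = 0 then σ else τ, ?_, ?_, ?_, ?_⟩
      · intro i
        show K.IsMaxFace (if i = 0 then σ else τ)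
        split_ifs
        · exact hσ
        · exact hτ
      · simp
      · have : (Fin.last 1 : Fin 2) ≠ 0 := by decide
        simp [this]
      · intro i
        have hi : i = 0 := Subsingleton.elim i 0
        subst hi
        have e1 : ((0 : Fin 1).castSucc : Fin 2) = 0 := rfl
        have e2 : ((0 : Fin 1).succ : Fin 2) = 1 := rfl
        rw [e1, e2]
        have e3 : (1 : Fin 2) ≠ 0 := by decide
        simp only [if_true, if_neg e3, if_pos rfl]
        have hsup : (Finset.univ.sup fun j : Fin 2 =>
            (if j = 0 then σ else τ).card) = 1 := by
          apply le_antisymm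
          · refine Finset.sup_le fun j _ => ?_
            split_ifs <;> omega
          · calc 1 = (if (0 : Fin 2) = 0 then σ else τ).card := by rw [if_pos rfl, hσ1]
              _ ≤ _ := Finset.le_sup
                  (f := fun j : Fin 2 => (if j = 0 then σ else τ).card)
                  (Finset.mem_univ 0)
        rw [hsup, hint]
        simp

end SComplexAux

open SComplex in
/-- if `Σ` is finite-dimensional and `Lk_Σ σ` is connected for
every face `σ ∈ Σ` (including `σ = ∅`) with `dim Lk_Σ σ ≥ 1`, then `Σ` is pure
and strongly connected. -/
theorem pure_stronglyConnected_of_links_connected {V : Type*} [DecidableEq V]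
    (K : SComplex V) (hfin : K.FiniteDim)
    (hlk : ∀ σ ∈ K.faces, 1 ≤ (K.link σ).dim → (K.link σ).Connected) :
    K.Pure ∧ K.StronglyConnected := by
  obtain ⟨b, hbb⟩ := hfin
  have hbb' : ∀ s ∈ K.faces, (s.card : ℤ) - 1 ≤ b := fun s hs => hbb ⟨s, hs, rfl⟩
  have hbound : ∀ s ∈ K.faces, s.card ≤ (b + 1).toNat := by
    intro s hs
    have h1 := hbb' s hs
    have h2 : (s.card : ℤ) ≤ ((b + 1).toNat : ℤ) :=
      le_trans (by omega) (Int.self_le_toNat _)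
    exact_mod_cast h2
  have hsc : K.StronglyConnected := SComplexAux.main _ K hbound hlk
  refine ⟨?_, hsc⟩
  intro s hs
  unfold SComplex.dim
  refine le_antisymm (le_csSup ⟨b, hbb⟩ ⟨s, hs.1, rfl⟩) (csSup_le ⟨_, s, hs.1, rfl⟩ ?_)
  rintro x ⟨t, ht, rfl⟩
  obtain ⟨m, hm, htm⟩ := SComplexAux.exists_maxface hbound ht
  have h3 := (SComplexAux.scp_analysis (hsc s m hs hm)).1
  have h4 := Finset.card_le_card htm
  have h5 : t.card ≤ s.card := by omega
  push_cast
  omega
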